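/- For n≥1 and k≥2, the diameter of the k-Pell graph Π(n,k) equals nk - ⌈n/2⌉. -/

import Mathlib

def isPellStr (k : ℕ) : List ℕ → Bool
  | [] => true
  | [a] => decide (a < k)
  | a :: b :: rest =>
    if a = k then (b == k) && isPellStr k rest
    else decide (a < k) && isPellStr k (b :: rest)

abbrev PellVert (n k : ℕ) := {f : Fin n → Fin (k + 1) // isPellStr k (List.ofFn fun i => (f i : ℕ)) = true}

def pellAdj (k : ℕ) {n : ℕ} (f g : Fin n → Fin (k + 1)) : Prop :=
  (∃ j : Fin n, ((g j : ℕ) = (f j : ℕ) + 1) ∧ ((f j : ℕ) + 1 < k) ∧ ∀ i, i ≠ j → f i = g i) ∨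
  (∃ j j' : Fin n, ((j' : ℕ) = (j : ℕ) + 1) ∧ ((f j : ℕ) = k - 1) ∧ ((f j' : ℕ) = k - 1) ∧
    ((g j : ℕ) = k) ∧ ((g j' : ℕ) = k) ∧ ∀ i, i ≠ j → i ≠ j' → f i = g i)

def kPellGraph (n k : ℕ) : SimpleGraph (PellVert n k) :=
  SimpleGraph.fromRel (fun u v => pellAdj k u.1 v.1)

noncomputable def pellEcc {n k : ℕ} (v : PellVert n k) : ℕ :=
  Finset.univ.sup fun u => (kPellGraph n k).dist v u

noncomputable def pellRadius (n k : ℕ) : ℕ := sInf (Set.range (pellEcc (n := n) (k := k)))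

noncomputable def pellDiam (n k : ℕ) : ℕ := Finset.univ.sup (pellEcc (n := n) (k := k))

def pellCenter (n k : ℕ) : Set (PellVert n k) := {v | pellEcc v = pellRadius n k}

/-!
Weight a letter `x < k` by `2x` and the letter `k` by `2k - 1`, and let the potential of a string
be its total weight; then every edge of `Π(n,k)` raises the potential by exactly `2`, since a
factor `kk` weighs `2` more than `(k-1)(k-1)`. Conversely, from a string `u` one can walk down to
any componentwise smaller string `w` with all letters below `k`, one edge at a time, by lowering
either the first factor `kk` (Pell strings have their `k`s in aligned pairs) or a single letter.
Hence the distance from `w` to `u` is exactly half their potential difference.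

For the upper bound, route `u` to `v` through their meet `min(u, v, k-1)`: each position
contributes at most `2k - 1` to the two potential differences, so the distance is at most
`⌊n(2k-1)/2⌋ = nk - ⌈n/2⌉`. The string `(kk)^⌊n/2⌋ (k-1)^(n mod 2)` is at exactly this distance
from `0ⁿ`.
-/

namespace SimpleGraph

variable {V : Type*} {G : SimpleGraph V}

theorem Walk.le_add_mul_length (φ : V → ℕ) {c : ℕ} (hφ : ∀ u v, G.Adj u v → φ v ≤ φ u + c)
    {x y : V} (p : G.Walk x y) : φ y ≤ φ x + c * p.length := by
  induction p with
  | nil => simp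
  | cons h _ ih =>
    rw [Walk.length_cons]
    linarith [hφ _ _ h]

theorem Reachable.le_add_mul_dist (φ : V → ℕ) {c : ℕ} (hφ : ∀ u v, G.Adj u v → φ v ≤ φ u + c)
    {x y : V} (h : G.Reachable x y) : φ y ≤ φ x + c * G.dist x y := by
  obtain ⟨p, hp⟩ := h.exists_walk_length_eq_dist
  exact hp ▸ p.le_add_mul_length φ hφ

theorem exists_walk_of_forall_exists_adj (φ : V → ℕ) (P : V → Prop) {c : ℕ} (hc : 0 < c) {w : V}
    (hstep : ∀ u, P u → u ≠ w → ∃ u', P u' ∧ G.Adj u' u ∧ φ u' + c = φ u) :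
    ∀ u, P u → ∃ p : G.Walk w u, φ w + c * p.length = φ u := by
  intro u
  induction h : φ u using Nat.strong_induction_on generalizing u with
  | _ m ih =>
    intro hu
    by_cases huw : u = w
    · subst huw
      exact ⟨.nil, by simp [h]⟩
    obtain ⟨u', hu', hadj, hφ⟩ := hstep u hu huw
    obtain ⟨p, hp⟩ := ih (φ u') (by omega) u' rfl hu'
    exact ⟨p.concat hadj, by rw [Walk.length_concat]; linarith⟩

theorem add_mul_dist_eq_of_forall_exists_adj (φ : V → ℕ) (P : V → Prop) {c : ℕ} (hc : 0 < c)
    (hφ : ∀ u v, G.Adj u v → φ v ≤ φ u + c) {w : V}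
    (hstep : ∀ u, P u → u ≠ w → ∃ u', P u' ∧ G.Adj u' u ∧ φ u' + c = φ u) {u : V} (hu : P u) :
    φ w + c * G.dist w u = φ u := by
  obtain ⟨p, hp⟩ := exists_walk_of_forall_exists_adj φ P hc hstep u hu
  have hle := Reachable.le_add_mul_dist φ hφ ⟨p⟩
  have := Nat.mul_le_mul_left c (dist_le p)
  omega

end SimpleGraph

theorem isPellStr_cons_of_lt {k a : ℕ} (ha : a < k) (l : List ℕ) :
    isPellStr k (a :: l) = isPellStr k l := by
  cases l <;> simp [isPellStr, ha, ha.ne]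

theorem isPellStr_cons_cons_self (k : ℕ) (l : List ℕ) :
    isPellStr k (k :: k :: l) = isPellStr k l := by
  simp [isPellStr]

theorem isPellStr_of_forall_lt {k : ℕ} {l : List ℕ} (h : ∀ x ∈ l, x < k) : isPellStr k l := by
  induction l with
  | nil => rfl
  | cons a l ih =>
    rw [isPellStr_cons_of_lt (h a List.mem_cons_self)]
    exact ih fun x hx => h x (List.mem_cons_of_mem a hx)

theorem isPellStr_replicate_append {k : ℕ} {l : List ℕ} (h : isPellStr k l) (m : ℕ) :
    isPellStr k (List.replicate (2 * m) k ++ l) := by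
  induction m with
  | zero => simpa using h
  | succ m ih =>
    rw [show 2 * (m + 1) = 2 * m + 1 + 1 by ring, List.replicate_succ, List.replicate_succ]
    simpa only [List.cons_append, isPellStr_cons_cons_self] using ih

theorem isPellStr_exists_pair {k a b : ℕ} (ha : a < k) (hb : b < k) {l : List ℕ}
    (hl : isPellStr k l) (hk : k ∈ l) :
    ∃ i, l[i]? = some k ∧ l[i + 1]? = some k ∧ isPellStr k ((l.set i a).set (i + 1) b) := by
  induction l with
  | nil => simp at hk
  | cons x t ih =>
    by_cases hx : x = k
    · subst hx
      match t, hl with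
      | [], hl => simp [isPellStr] at hl
      | y :: r, hl =>
        simp only [isPellStr, if_pos, Bool.and_eq_true, beq_iff_eq] at hl
        obtain ⟨rfl, hr⟩ := hl
        refine ⟨0, rfl, rfl, ?_⟩
        simpa [isPellStr_cons_of_lt ha, isPellStr_cons_of_lt hb] using hr
    · have hxk : x < k := by
        cases t <;> simp_all [isPellStr]
      rw [isPellStr_cons_of_lt hxk] at hl
      obtain ⟨i, hi, hi', hset⟩ := ih hl (by simpa [Ne.symm hx] using hk)
      exact ⟨i + 1, hi, hi', by simpa [isPellStr_cons_of_lt hxk] using hset⟩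

theorem List.ofFn_comp_update {α β : Type*} {n : ℕ} (g : α → β) (f : Fin n → α) (j : Fin n)
    (a : α) : List.ofFn (fun i => g (Function.update f j a i)) =
      (List.ofFn fun i => g (f i)).set j (g a) := by
  refine List.ext_getElem (by simp) fun i _ _ => ?_
  simp only [List.getElem_ofFn, List.getElem_set, Function.update_apply, Fin.ext_iff, eq_comm]
  split_ifs <;> rfl

theorem div_two_mul_add_mod_two_mul (n : ℕ) {k : ℕ} (hk : 1 ≤ k) :
    n / 2 * (2 * k - 1) + n % 2 * (k - 1) = n * k - (n + 1) / 2 := by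
  obtain ⟨j, rfl⟩ : ∃ j, k = j + 1 := ⟨k - 1, by omega⟩
  rw [show 2 * (j + 1) - 1 = 2 * j + 1 by omega, Nat.add_sub_cancel]
  rcases Nat.even_or_odd' n with ⟨t, rfl | rfl⟩
  · rw [show 2 * t / 2 = t by omega, show 2 * t % 2 = 0 by omega,
      show (2 * t + 1) / 2 = t by omega]
    refine Nat.eq_sub_of_add_eq ?_
    ring
  · rw [show (2 * t + 1) / 2 = t by omega, show (2 * t + 1) % 2 = 1 by omega,
      show (2 * t + 1 + 1) / 2 = t + 1 by omega]
    refine Nat.eq_sub_of_add_eq ?_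
    ring

def pellWeight (k x : ℕ) : ℕ := if x = k then 2 * k - 1 else 2 * x

def pellPotential (k : ℕ) {n : ℕ} (f : Fin n → Fin (k + 1)) : ℕ := ∑ i, pellWeight k (f i)

theorem pellPotential_eq_sum_map_ofFn {k n : ℕ} (f : Fin n → Fin (k + 1)) :
    pellPotential k f = ((List.ofFn fun i => (f i : ℕ)).map (pellWeight k)).sum := by
  simp [pellPotential, List.sum_ofFn]

theorem pellPotential_add_sum_eq {k n : ℕ} {f g : Fin n → Fin (k + 1)} (s : Finset (Fin n))
    (h : ∀ i ∉ s, f i = g i) :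
    pellPotential k f + ∑ i ∈ s, pellWeight k (g i) =
      pellPotential k g + ∑ i ∈ s, pellWeight k (f i) := by
  unfold pellPotential
  rw [← Finset.sum_add_sum_compl s, ← Finset.sum_add_sum_compl s (fun i => pellWeight k (g i)),
    Finset.sum_congr rfl fun i hi => congrArg (fun x : Fin (k + 1) => pellWeight k x)
      (h i (Finset.mem_compl.1 hi))]
  ring

theorem pellPotential_of_pellAdj {k n : ℕ} (hk : 1 ≤ k) {f g : Fin n → Fin (k + 1)}
    (h : pellAdj k f g) : pellPotential k g = pellPotential k f + 2 := by
  rcases h with ⟨j, hgj, hlt, heq⟩ | ⟨j, j', hj', hfj, hfj', hgj, hgj', heq⟩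
  · have := pellPotential_add_sum_eq {j} fun i hi => heq i (by simpa using hi)
    simp only [Finset.sum_singleton, pellWeight, hgj] at this
    split_ifs at this <;> omega
  · have hne : j ≠ j' := fun h => by simp [h] at hj'
    have := pellPotential_add_sum_eq {j, j'} fun i hi => by
      simp only [Finset.mem_insert, Finset.mem_singleton, not_or] at hi
      exact heq i hi.1 hi.2
    simp only [Finset.sum_pair hne, pellWeight, hfj, hfj', hgj, hgj'] at this
    split_ifs at this <;> omega

theorem pellWeight_add_le {k a b : ℕ} (hk : 2 ≤ k) (ha : a ≤ k) (hb : b ≤ k) :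
    pellWeight k a + pellWeight k b ≤ 2 * pellWeight k (min (min a b) (k - 1)) + (2 * k - 1) := by
  unfold pellWeight
  split_ifs <;> omega

section kPellGraph

variable {n k : ℕ}

theorem kPellGraph_adj_of_pellAdj (hk : 1 ≤ k) {u v : PellVert n k} (h : pellAdj k u.1 v.1) :
    (kPellGraph n k).Adj u v := by
  refine (SimpleGraph.fromRel_adj _ _ _).2 ⟨fun huv => ?_, Or.inl h⟩
  have := pellPotential_of_pellAdj hk h
  rw [huv] at this
  omega

theorem pellPotential_le_of_adj (hk : 1 ≤ k) {u v : PellVert n k} (h : (kPellGraph n k).Adj u v) :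
    pellPotential k v.1 ≤ pellPotential k u.1 + 2 := by
  rcases h.2 with h | h <;> have := pellPotential_of_pellAdj hk h <;> omega

theorem exists_pellAdj_of_forall_lt {w u : Fin n → Fin (k + 1)} (hu : ∀ i, (u i : ℕ) < k)
    (hwu : w ≤ u) (hne : w ≠ u) : ∃ u' : PellVert n k, w ≤ u'.1 ∧ pellAdj k u'.1 u := by
  obtain ⟨i, hi⟩ : ∃ i, (w i : ℕ) < u i := by
    by_contra! h
    exact hne (le_antisymm hwu h)
  let u' := Function.update u i ⟨u i - 1, by omega⟩
  have hu' : ∀ j, (u' j : ℕ) < k := fun j => by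
    rcases eq_or_ne j i with rfl | hj
    · simp only [u', Function.update_self]; omega
    · simpa [u', Function.update_of_ne hj] using hu j
  refine ⟨⟨u', isPellStr_of_forall_lt <| by simpa [List.mem_ofFn] using hu'⟩, fun j => ?_,
    Or.inl ⟨i, ?_, ?_, fun j hj => Function.update_of_ne hj _ _⟩⟩
  · rcases eq_or_ne j i with rfl | hj
    · simp only [u', Function.update_self, Fin.le_def]
      exact Nat.le_sub_one_of_lt hi
    · simpa [u', Function.update_of_ne hj] using hwu j
  all_goals simp only [u', Function.update_self]; have := hu i; omega

theorem exists_pellAdj_of_exists_eq {w : Fin n → Fin (k + 1)} (hw : ∀ i, (w i : ℕ) < k)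
    (u : PellVert n k) (hwu : w ≤ u.1) (hu : ∃ i, (u.1 i : ℕ) = k) :
    ∃ u' : PellVert n k, w ≤ u'.1 ∧ pellAdj k u'.1 u.1 := by
  obtain ⟨i₀, hi₀⟩ := hu
  have hk : k - 1 < k := Nat.sub_one_lt_of_lt (hw i₀)
  obtain ⟨i, hi, hi', hset⟩ := isPellStr_exists_pair hk hk u.2 (List.mem_ofFn.2 ⟨i₀, hi₀⟩)
  simp only [List.getElem?_ofFn, Option.dite_none_right_eq_some, Option.some.injEq] at hi hi'
  obtain ⟨hin, hi⟩ := hi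
  obtain ⟨hin', hi'⟩ := hi'
  let c : Fin (k + 1) := ⟨k - 1, by omega⟩
  let u' := Function.update (Function.update u.1 ⟨i, hin⟩ c) ⟨i + 1, hin'⟩ c
  have hu' : ∀ j, u' j = u.1 j ∨ u' j = c := fun j => by
    simp only [u', Function.update_apply]
    split_ifs <;> simp
  refine ⟨⟨u', ?_⟩, fun j => ?_, Or.inr ⟨⟨i, hin⟩, ⟨i + 1, hin'⟩, rfl, ?_, ?_, hi, hi', ?_⟩⟩
  · simpa only [u', List.ofFn_comp_update] using hset
  · show w j ≤ u' j
    rcases hu' j with h | h <;> rw [h]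
    · exact hwu j
    · simpa [Fin.le_def, c] using Nat.le_sub_one_of_lt (hw j)
  · simp [u', c, Fin.ext_iff]
  · simp [u', c]
  · intro j hj hj'
    simp [u', Function.update_of_ne hj, Function.update_of_ne hj']

theorem kPellGraph_exists_adj_below (hk : 1 ≤ k) {w : PellVert n k} (hw : ∀ i, (w.1 i : ℕ) < k)
    (u : PellVert n k) (hwu : w.1 ≤ u.1) (hne : u ≠ w) :
    ∃ u' : PellVert n k, w.1 ≤ u'.1 ∧ (kPellGraph n k).Adj u' u ∧
      pellPotential k u'.1 + 2 = pellPotential k u.1 := by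
  obtain ⟨u', hwu', h⟩ : ∃ u' : PellVert n k, w.1 ≤ u'.1 ∧ pellAdj k u'.1 u.1 := by
    by_cases hu : ∃ i, (u.1 i : ℕ) = k
    · exact exists_pellAdj_of_exists_eq hw u hwu hu
    · push Not at hu
      exact exists_pellAdj_of_forall_lt (fun i => lt_of_le_of_ne (u.1 i).is_le (hu i)) hwu
        fun h => hne (Subtype.ext h.symm)
  exact ⟨u', hwu', kPellGraph_adj_of_pellAdj hk h, (pellPotential_of_pellAdj hk h).symm⟩

theorem kPellGraph_reachable_of_le (hk : 1 ≤ k) {w u : PellVert n k} (hw : ∀ i, (w.1 i : ℕ) < k)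
    (hwu : w.1 ≤ u.1) : (kPellGraph n k).Reachable w u :=
  let ⟨p, _⟩ := SimpleGraph.exists_walk_of_forall_exists_adj (fun v => pellPotential k v.1)
    (fun v => w.1 ≤ v.1) two_pos (kPellGraph_exists_adj_below hk hw) u hwu
  ⟨p⟩

theorem pellPotential_add_two_mul_dist (hk : 1 ≤ k) {w u : PellVert n k}
    (hw : ∀ i, (w.1 i : ℕ) < k) (hwu : w.1 ≤ u.1) :
    pellPotential k w.1 + 2 * (kPellGraph n k).dist w u = pellPotential k u.1 :=
  SimpleGraph.add_mul_dist_eq_of_forall_exists_adj (fun v => pellPotential k v.1)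
    (fun v => w.1 ≤ v.1) two_pos (fun _ _ h => pellPotential_le_of_adj hk h)
    (kPellGraph_exists_adj_below hk hw) hwu

theorem kPellGraph_dist_le (hk : 2 ≤ k) (u v : PellVert n k) :
    (kPellGraph n k).dist u v ≤ n * k - (n + 1) / 2 := by
  let m : Fin n → Fin (k + 1) := fun i => ⟨min (min (u.1 i) (v.1 i)) (k - 1), by omega⟩
  have hm : ∀ i, (m i : ℕ) < k := fun i => by simp only [m]; omega
  let w : PellVert n k := ⟨m, isPellStr_of_forall_lt <| by simpa [List.mem_ofFn] using hm⟩
  have hwu : m ≤ u.1 := fun i => by simp only [m, Fin.le_def]; omega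
  have hwv : m ≤ v.1 := fun i => by simp only [m, Fin.le_def]; omega
  have hu := pellPotential_add_two_mul_dist (w := w) (by omega) hm hwu
  have hv := pellPotential_add_two_mul_dist (w := w) (by omega) hm hwv
  have hsum : pellPotential k u.1 + pellPotential k v.1 ≤
      2 * pellPotential k w.1 + n * (2 * k - 1) := by
    simp only [pellPotential, ← Finset.sum_add_distrib, Finset.mul_sum]
    calc _ ≤ ∑ i, (2 * pellWeight k (m i) + (2 * k - 1)) :=
          Finset.sum_le_sum fun i _ => pellWeight_add_le hk (u.1 i).is_le (v.1 i).is_le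
      _ = _ := by simp [Finset.sum_add_distrib]; rfl
  have htri : (kPellGraph n k).dist u v ≤
      (kPellGraph n k).dist w u + (kPellGraph n k).dist w v := by
    rw [← SimpleGraph.dist_comm (u := u) (v := w)]
    exact (kPellGraph_reachable_of_le (w := w) (by omega) hm hwu).symm.dist_triangle_left v
  have hnk : n * (2 * k - 1) + n = 2 * (n * k) := by
    rw [← Nat.mul_add_one, Nat.sub_add_cancel (by omega)]
    ring
  have : n ≤ n * k := Nat.le_mul_of_pos_right n (by omega)
  omega

theorem kPellGraph_exists_dist_eq (hk : 1 ≤ k) :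
    ∃ a b : PellVert n k, (kPellGraph n k).dist a b = n * k - (n + 1) / 2 := by
  let l := List.replicate (2 * (n / 2)) k ++ List.replicate (n % 2) (k - 1)
  have hl : l.length = n := by simp [l]; omega
  have hlk : ∀ x ∈ l, x ≤ k := fun x hx => by
    simp only [l, List.mem_append, List.mem_replicate] at hx
    omega
  let b : Fin n → Fin (k + 1) :=
    fun i => ⟨l[i], Nat.lt_succ_of_le (hlk _ (List.getElem_mem _))⟩
  have hb : List.ofFn (fun i => (b i : ℕ)) = l := List.ext_getElem (by simp [hl]) (by simp [b])
  let top : PellVert n k := ⟨b, hb ▸ isPellStr_replicate_append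
    (isPellStr_of_forall_lt fun x hx => by rw [(List.mem_replicate.1 hx).2]; omega) _⟩
  let zero : PellVert n k := ⟨fun _ => 0, isPellStr_of_forall_lt <| by simp; omega⟩
  refine ⟨zero, top, ?_⟩
  have hdist := pellPotential_add_two_mul_dist (w := zero) (u := top) (by omega)
    (fun _ => by simp [zero]; omega) (fun _ => Fin.zero_le _)
  have hzero : pellPotential k zero.1 = 0 :=
    Finset.sum_eq_zero fun _ _ => if_neg (by simp [zero]; omega)
  have htop : pellPotential k top.1 = 2 * (n / 2) * (2 * k - 1) + n % 2 * (2 * (k - 1)) := by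
    rw [pellPotential_eq_sum_map_ofFn, hb]
    simp [l, List.sum_replicate, pellWeight, show k - 1 ≠ k by omega]
  rw [← div_two_mul_add_mod_two_mul n (by omega : 1 ≤ k)]
  linarith

end kPellGraph

theorem kPellGraph_diam_general (n k : ℕ) (hk : 2 ≤ k) :
    pellDiam n k = n * k - (n + 1) / 2 := by
  refine le_antisymm
    (Finset.sup_le fun u _ => Finset.sup_le fun v _ => kPellGraph_dist_le hk u v) ?_
  obtain ⟨a, b, hab⟩ := kPellGraph_exists_dist_eq (n := n) (by omega : 1 ≤ k)
  calc n * k - (n + 1) / 2 = (kPellGraph n k).dist a b := hab.symm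
    _ ≤ pellEcc a := Finset.le_sup (f := fun u => (kPellGraph n k).dist a u) (Finset.mem_univ b)
    _ ≤ pellDiam n k := Finset.le_sup (Finset.mem_univ a)

theorem kPellGraph_diam (n k : ℕ) (hn : 1 ≤ n) (hk : 2 ≤ k) :
    pellDiam n k = n * k - (n + 1) / 2 :=
  kPellGraph_diam_general n k hk
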